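/- arXiv:1509.01194 — 6 statements merged into one kernel-verified Lean document; each statement's English description precedes it below -/
import Mathlib

section
/- Let X₁,...,X_ℓ be mutually independent integer-valued random variables with finite third moments, Vᵢ = Var(Xᵢ), and M = E[ΣᵢXᵢ] > 0. Let φ* be the distribution obtained by fitness-proportional selection: φ*(x) ∝ F(x)·φ(x) with F(x) = Σᵢxᵢ. Then the variance of the fitness under the product of the marginals of φ* exceeds the fitness variance of φ* by exactly (Σ_{i≠j} VᵢVⱼ)/M²; in particular this quantity is non-negative, i.e., LD₂(φ*) = −(Σ_{i≠j} VᵢVⱼ)/M² ≤ 0. -/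
open scoped BigOperators

noncomputable def fmean (φ : ℤ → ℝ) : ℝ := ∑ᶠ x : ℤ, (x : ℝ) * φ x

noncomputable def fvar (φ : ℤ → ℝ) : ℝ := ∑ᶠ x : ℤ, ((x : ℝ) - fmean φ) ^ 2 * φ x

def fitness {ℓ : ℕ} (x : Fin ℓ → ℤ) : ℝ := ((∑ i, x i : ℤ) : ℝ)

noncomputable def fitMean {ℓ : ℕ} (ψ : (Fin ℓ → ℤ) → ℝ) : ℝ :=
  ∑ᶠ x : Fin ℓ → ℤ, fitness x * ψ x

noncomputable def fitVar {ℓ : ℕ} (ψ : (Fin ℓ → ℤ) → ℝ) : ℝ :=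
  ∑ᶠ x : Fin ℓ → ℤ, (fitness x - fitMean ψ) ^ 2 * ψ x

noncomputable def marginal {ℓ : ℕ} (ψ : (Fin ℓ → ℤ) → ℝ) (i : Fin ℓ) (y : ℤ) : ℝ :=
  ∑ᶠ x : Fin ℓ → ℤ, if x i = y then ψ x else 0

noncomputable def recomb {ℓ : ℕ} (ψ : (Fin ℓ → ℤ) → ℝ) : (Fin ℓ → ℤ) → ℝ :=
  fun x => ∏ i, marginal ψ i (x i)

/-!
Selection multiplies a weight by F/M, i.e. it size-biases the weight by the fitness F. If F has
mean M, variance V and third central moment K, the size-biased weight gives F the variance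
V + K/M - V²/M². At linkage equilibrium the second and third central moments of the additive
fitness are the sums of the per-locus moments Vᵢ, Kᵢ (up to order three, central moments are
cumulants), so Var(φ*) = ΣVᵢ + ΣKᵢ/M - (ΣVᵢ)²/M². With mᵢ the mean of xᵢ, the i-th marginal of
φ* is φᵢ size-biased by xᵢ + (M - mᵢ), an observable with mean M and the same central moments
as xᵢ; hence it has variance Vᵢ + Kᵢ/M - Vᵢ²/M², and recombination adds these up. The
difference of the two is ((ΣVᵢ)² - ΣVᵢ²)/M².
-/

open Finset Function

lemma sq_sum_sub_sum_sq {ι R : Type*} [CommRing R] [DecidableEq ι] (s : Finset ι) (f : ι → R) :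
    (∑ i ∈ s, f i) ^ 2 - ∑ i ∈ s, f i ^ 2
      = ∑ i ∈ s, ∑ j ∈ s, if i ≠ j then f i * f j else 0 := by
  simp only [sq, sum_mul_sum, ← sum_sub_distrib]
  refine sum_congr rfl fun i hi => ?_
  rw [← sum_erase_eq_sub hi, ← sum_filter, filter_ne]

namespace Selection

section Combinatorics

variable {ι : Type*} [Fintype ι] [DecidableEq ι]

lemma exists_eq_single_of_ne_one {k : ι → ℕ} {n : ℕ} (hk : ∑ l, k l = n) (hn0 : n ≠ 0)
    (hn3 : n ≤ 3) (h1 : ∀ l, k l ≠ 1) : ∃ i, k = Pi.single i n := by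
  obtain ⟨i, -, hi⟩ := exists_ne_zero_of_sum_ne_zero (hk ▸ hn0 : ∑ l, k l ≠ 0)
  have hk0 : ∀ j ≠ i, k j = 0 := by
    intro j hji
    by_contra hj
    have := add_le_sum (f := k) (fun _ _ => Nat.zero_le _) (mem_univ i) (mem_univ j) hji.symm
    have := h1 i
    have := h1 j
    omega
  refine ⟨i, funext fun j => ?_⟩
  obtain rfl | hji := eq_or_ne j i
  · rw [Pi.single_eq_same, ← hk, sum_eq_single j (fun l _ => hk0 l) (by simp)]
  · rw [Pi.single_eq_of_ne hji, hk0 j hji]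

lemma sum_multinomial_mul_prod_of_le_three {R : Type*} [CommSemiring R] (μ : ι → ℕ → R)
    (h0 : ∀ l, μ l 0 = 1) (h1 : ∀ l, μ l 1 = 0) {n : ℕ} (hn0 : n ≠ 0) (hn3 : n ≤ 3) :
    ∑ k ∈ piAntidiag univ n, (Nat.multinomial univ k : R) * ∏ l, μ l (k l) = ∑ i, μ i n := by
  calc ∑ k ∈ piAntidiag univ n, (Nat.multinomial univ k : R) * ∏ l, μ l (k l)
      = ∑ k ∈ univ.image (Pi.single · n), (Nat.multinomial univ k : R) * ∏ l, μ l (k l) := by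
        refine (sum_subset (fun k hk => ?_) fun k hk hk' => ?_).symm
        · obtain ⟨i, -, rfl⟩ := mem_image.mp hk
          simp [mem_piAntidiag]
        · obtain ⟨l, hl⟩ : ∃ l, k l = 1 := by
            by_contra! h
            obtain ⟨i, rfl⟩ := exists_eq_single_of_ne_one (mem_piAntidiag.mp hk).1 hn0 hn3 h
            exact hk' (mem_image_of_mem _ (mem_univ i))
          rw [prod_eq_zero (mem_univ l) (by rw [hl, h1]), mul_zero]
    _ = ∑ i, μ i n := by
        rw [sum_image fun i _ j _ h => by_contra fun hij =>
          hn0 (by simpa [Pi.single_eq_of_ne hij] using congrFun h i)]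
        refine sum_congr rfl fun i _ => ?_
        rw [Nat.multinomial_single, Nat.cast_one, one_mul,
          prod_eq_single i (fun l _ hl => by rw [Pi.single_eq_of_ne hl, h0]) (by simp),
          Pi.single_eq_same]

end Combinatorics

variable {α : Type*}

/- Weights `w : α → ℝ` stand for distributions (neither nonnegativity nor total mass one is
built in) and `f : α → ℝ` for observables; `fmean`, `fvar`, `fitMean` and `fitVar` are `mean`
and `centralMoment · · 2` by definition. -/

noncomputable def mean (w f : α → ℝ) : ℝ := ∑ᶠ a, f a * w a

noncomputable def centralMoment (w f : α → ℝ) (k : ℕ) : ℝ :=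
  ∑ᶠ a, (f a - mean w f) ^ k * w a

noncomputable def sizeBias (w f : α → ℝ) (a : α) : ℝ := f a / mean w f * w a

def prodWeight {ι : Type*} [Fintype ι] (ρ : ι → α → ℝ) (x : ι → α) : ℝ := ∏ l, ρ l (x l)

lemma centralMoment_nonneg {w : α → ℝ} (hw : ∀ a, 0 ≤ w a) (f : α → ℝ) {k : ℕ}
    (hk : Even k) : 0 ≤ centralMoment w f k :=
  finsum_nonneg fun a => mul_nonneg (hk.pow_nonneg _) (hw a)

section Weight

variable {w : α → ℝ} {t : Finset α}

lemma finsum_mul_eq_sum (ht : support w ⊆ t) (g : α → ℝ) :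
    ∑ᶠ a, g a * w a = ∑ a ∈ t, g a * w a :=
  finsum_eq_sum_of_support_subset _ ((support_mul_subset_right _ _).trans ht)

lemma mean_eq_sum (ht : support w ⊆ t) (f : α → ℝ) : mean w f = ∑ a ∈ t, f a * w a :=
  finsum_mul_eq_sum ht f

lemma centralMoment_eq_sum (ht : support w ⊆ t) (f : α → ℝ) (k : ℕ) :
    centralMoment w f k = ∑ a ∈ t, (f a - mean w f) ^ k * w a :=
  finsum_mul_eq_sum ht _

lemma sum_ite_eq_mul [DecidableEq α] (ht : support w ⊆ t) (y : α) (c : α → ℝ) :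
    ∑ a ∈ t, (if a = y then c a else 0) * w a = c y * w y := by
  simp only [ite_zero_mul, sum_ite_eq']
  split_ifs with hy
  · rfl
  · rw [notMem_support.mp fun h => hy (ht h), mul_zero]

lemma support_sizeBias_subset (ht : support w ⊆ t) (f : α → ℝ) : support (sizeBias w f) ⊆ t :=
  (support_mul_subset_right _ _).trans ht

variable (ht : support w ⊆ t) (hw : ∑ a ∈ t, w a = 1)
include ht hw

lemma sum_sub_mean_mul (f : α → ℝ) : ∑ a ∈ t, (f a - mean w f) * w a = 0 := by
  simp only [sub_mul, sum_sub_distrib, ← mul_sum, hw, mul_one]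
  rw [← mean_eq_sum ht, sub_self]

lemma mean_add_const (f : α → ℝ) (c : ℝ) : mean w (fun a => f a + c) = mean w f + c := by
  simp only [mean_eq_sum ht, add_mul, sum_add_distrib, ← mul_sum, hw, mul_one]

lemma centralMoment_add_const (f : α → ℝ) (c : ℝ) (k : ℕ) :
    centralMoment w (fun a => f a + c) k = centralMoment w f k := by
  simp only [centralMoment, mean_add_const ht hw, add_sub_add_right_eq_sub]

lemma sum_mul_eq_of_eq_cubic {f g : α → ℝ} (c₀ c₁ c₂ c₃ : ℝ)
    (hg : ∀ a, g a = c₀ + c₁ * (f a - mean w f) + c₂ * (f a - mean w f) ^ 2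
      + c₃ * (f a - mean w f) ^ 3) :
    ∑ a ∈ t, g a * w a = c₀ + c₂ * centralMoment w f 2 + c₃ * centralMoment w f 3 := by
  simp only [hg, add_mul, mul_assoc, sum_add_distrib, ← mul_sum, hw, sum_sub_mean_mul ht hw,
    ← centralMoment_eq_sum ht]
  ring

variable {f : α → ℝ}

lemma sum_sizeBias (hM : mean w f ≠ 0) : ∑ a ∈ t, sizeBias w f a = 1 := by
  simpa [sizeBias] using sum_mul_eq_of_eq_cubic ht hw (g := fun a => f a / mean w f)
    1 (mean w f)⁻¹ 0 0 fun a => by field_simp; ring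

lemma mean_sizeBias (hM : mean w f ≠ 0) :
    mean (sizeBias w f) f = mean w f + centralMoment w f 2 / mean w f := by
  rw [mean_eq_sum (support_sizeBias_subset ht f)]
  simp only [sizeBias, ← mul_assoc]
  rw [sum_mul_eq_of_eq_cubic ht hw (mean w f) 2 (mean w f)⁻¹ 0 fun a => by field_simp; ring]
  ring

lemma centralMoment_two_sizeBias (hM : mean w f ≠ 0) :
    centralMoment (sizeBias w f) f 2 = centralMoment w f 2 + centralMoment w f 3 / mean w f
      - centralMoment w f 2 ^ 2 / mean w f ^ 2 := by
  rw [centralMoment_eq_sum (support_sizeBias_subset ht f), mean_sizeBias ht hw hM]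
  simp only [sizeBias, ← mul_assoc]
  set M := mean w f
  set V := centralMoment w f 2
  rw [sum_mul_eq_of_eq_cubic ht hw ((V / M) ^ 2) ((V / M) ^ 2 / M - 2 * V / M)
    (1 - 2 * V / M ^ 2) M⁻¹ fun a => by field_simp; ring]
  field_simp
  ring

lemma centralMoment_two_sizeBias_add_const (c : ℝ) (hM : mean w f + c ≠ 0) :
    centralMoment (sizeBias w fun a => f a + c) f 2
      = centralMoment w f 2 + centralMoment w f 3 / (mean w f + c)
        - centralMoment w f 2 ^ 2 / (mean w f + c) ^ 2 := by
  have hM' : mean w (fun a => f a + c) ≠ 0 := by rwa [mean_add_const ht hw]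
  rw [← centralMoment_add_const (support_sizeBias_subset ht _) (sum_sizeBias ht hw hM') f c,
    centralMoment_two_sizeBias ht hw hM', mean_add_const ht hw, centralMoment_add_const ht hw,
    centralMoment_add_const ht hw]

end Weight

section Product

variable {ι : Type*} [Fintype ι] [DecidableEq ι] {s : ι → Finset α} {ρ : ι → α → ℝ}

lemma support_prodWeight_subset (hs : ∀ l, support (ρ l) ⊆ s l) :
    support (prodWeight ρ) ⊆ Fintype.piFinset s := fun _ hx =>
  Fintype.mem_piFinset.mpr fun l => hs l (prod_ne_zero_iff.mp hx l (mem_univ l))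

lemma sum_prod_mul_prodWeight (g : ι → α → ℝ) :
    ∑ x ∈ Fintype.piFinset s, (∏ l, g l (x l)) * prodWeight ρ x
      = ∏ l, ∑ y ∈ s l, g l y * ρ l y := by
  simp only [prodWeight, ← prod_mul_distrib]
  exact (prod_univ_sum s fun l y => g l y * ρ l y).symm

variable (hρ : ∀ l, ∑ y ∈ s l, ρ l y = 1)
include hρ

lemma sum_prodWeight : ∑ x ∈ Fintype.piFinset s, prodWeight ρ x = 1 := by
  simpa [hρ] using sum_prod_mul_prodWeight (s := s) (ρ := ρ) fun _ _ => (1 : ℝ)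

lemma sum_apply_mul_prodWeight (i : ι) (g : α → ℝ) :
    ∑ x ∈ Fintype.piFinset s, g (x i) * prodWeight ρ x = ∑ y ∈ s i, g y * ρ i y := by
  have h := sum_prod_mul_prodWeight (s := s) (ρ := ρ) fun l => if l = i then g else 1
  simp only [ite_apply, Pi.one_apply, Fintype.prod_ite_eq'] at h
  rw [h, prod_eq_single i (fun l _ hl => by simp [hl, hρ]) (by simp)]
  simp

lemma sum_apply_mul_apply_mul_prodWeight {i j : ι} (hij : i ≠ j) (g h : α → ℝ) :
    ∑ x ∈ Fintype.piFinset s, g (x i) * h (x j) * prodWeight ρ x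
      = (∑ y ∈ s i, g y * ρ i y) * ∑ y ∈ s j, h y * ρ j y := by
  have H := sum_prod_mul_prodWeight (s := s) (ρ := ρ)
    fun l => (if l = i then g else 1) * (if l = j then h else 1)
  simp only [Pi.mul_apply, ite_apply, Pi.one_apply, prod_mul_distrib,
    Fintype.prod_ite_eq'] at H
  rw [H, ← prod_subset (subset_univ {i, j}) fun l _ hl => by simp_all, prod_pair hij]
  simp [hij, hij.symm]

lemma sum_pow_sum_mul_prodWeight {d : ι → α → ℝ} (hd : ∀ l, ∑ y ∈ s l, d l y * ρ l y = 0)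
    {n : ℕ} (hn0 : n ≠ 0) (hn3 : n ≤ 3) :
    ∑ x ∈ Fintype.piFinset s, (∑ l, d l (x l)) ^ n * prodWeight ρ x
      = ∑ l, ∑ y ∈ s l, d l y ^ n * ρ l y := by
  simp_rw [sum_pow_eq_sum_piAntidiag, sum_mul, mul_assoc]
  rw [sum_comm]
  simp_rw [← mul_sum]
  rw [sum_congr rfl fun k _ => by rw [sum_prod_mul_prodWeight fun l y => d l y ^ k l]]
  exact sum_multinomial_mul_prod_of_le_three (fun l m => ∑ y ∈ s l, d l y ^ m * ρ l y)
    (by simp [hρ]) (by simpa using hd) hn0 hn3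

variable (hs : ∀ l, support (ρ l) ⊆ s l)
include hs

lemma mean_prodWeight_sum (f : ι → α → ℝ) :
    mean (prodWeight ρ) (fun x => ∑ l, f l (x l)) = ∑ l, mean (ρ l) (f l) := by
  simp only [mean_eq_sum (support_prodWeight_subset hs), mean_eq_sum (hs _), sum_mul]
  rw [sum_comm]
  exact sum_congr rfl fun l _ => sum_apply_mul_prodWeight hρ l (f l)

lemma centralMoment_prodWeight_sum (f : ι → α → ℝ) {n : ℕ} (hn0 : n ≠ 0) (hn3 : n ≤ 3) :
    centralMoment (prodWeight ρ) (fun x => ∑ l, f l (x l)) n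
      = ∑ l, centralMoment (ρ l) (f l) n := by
  simp only [centralMoment_eq_sum (support_prodWeight_subset hs), centralMoment_eq_sum (hs _),
    mean_prodWeight_sum hρ hs, ← sum_sub_distrib]
  exact sum_pow_sum_mul_prodWeight hρ (fun l => sum_sub_mean_mul (hs l) (hρ l) (f l)) hn0 hn3

lemma sum_ite_apply_mul_prodWeight [DecidableEq α] (i j : ι) (y : α) (g : α → ℝ) :
    ∑ x ∈ Fintype.piFinset s, (if x i = y then g (x j) else 0) * prodWeight ρ x
      = ρ i y * if j = i then g y else mean (ρ j) g := by
  obtain rfl | hji := eq_or_ne j i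
  · rw [sum_apply_mul_prodWeight hρ j fun z => if z = y then g z else 0,
      sum_ite_eq_mul (hs j), if_pos rfl, mul_comm]
  · calc ∑ x ∈ Fintype.piFinset s, (if x i = y then g (x j) else 0) * prodWeight ρ x
        = ∑ x ∈ Fintype.piFinset s, (if x i = y then 1 else 0) * g (x j) * prodWeight ρ x := by
          simp only [ite_zero_mul, one_mul]
      _ = ρ i y * if j = i then g y else mean (ρ j) g := by
          rw [sum_apply_mul_apply_mul_prodWeight hρ hji.symm (fun z => if z = y then 1 else 0) g,
            sum_ite_eq_mul (hs i) y fun _ => 1, if_neg hji, mean_eq_sum (hs j), one_mul]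

end Product

lemma fitness_eq_sum {ℓ : ℕ} : fitness = fun x : Fin ℓ → ℤ => ∑ l, ((x l : ℤ) : ℝ) :=
  funext fun _ => Int.cast_sum _ _

section Loci

variable {ℓ : ℕ} {s : Fin ℓ → Finset ℤ} {ρ : Fin ℓ → ℤ → ℝ}
  (hρ : ∀ l, ∑ y ∈ s l, ρ l y = 1) (hs : ∀ l, support (ρ l) ⊆ s l)
include hρ hs

lemma marginal_sizeBias_prodWeight (f : Fin ℓ → ℤ → ℝ) (i : Fin ℓ) :
    marginal (sizeBias (prodWeight ρ) fun x => ∑ l, f l (x l)) i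
      = sizeBias (ρ i) fun y =>
          f i y + (mean (prodWeight ρ) (fun x => ∑ l, f l (x l)) - mean (ρ i) (f i)) := by
  funext y
  set M := mean (prodWeight ρ) (fun x => ∑ l, f l (x l))
  have hmean : mean (ρ i) (fun z => f i z + (M - mean (ρ i) (f i))) = M := by
    rw [mean_add_const (hs i) (hρ i)]
    ring
  have hcompl : ∑ j ∈ {i}ᶜ, mean (ρ j) (f j) = M - mean (ρ i) (f i) := by
    rw [show M = _ from mean_prodWeight_sum hρ hs f, Fintype.sum_eq_add_sum_compl i]
    ring
  calc marginal (sizeBias (prodWeight ρ) fun x => ∑ l, f l (x l)) i y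
      = ∑ x ∈ Fintype.piFinset s,
          (if x i = y then (∑ l, f l (x l)) / M else 0) * prodWeight ρ x := by
        rw [marginal, ← finsum_mul_eq_sum (support_prodWeight_subset hs)]
        simp only [sizeBias, ite_zero_mul]
        rfl
    _ = M⁻¹ * ∑ j, ∑ x ∈ Fintype.piFinset s,
          (if x i = y then f j (x j) else 0) * prodWeight ρ x := by
        rw [sum_comm, mul_sum]
        refine sum_congr rfl fun x _ => ?_
        split_ifs <;> simp [sum_mul, mul_sum, div_eq_inv_mul, mul_assoc]
    _ = M⁻¹ * ∑ j, ρ i y * if j = i then f j y else mean (ρ j) (f j) := by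
        simp only [sum_ite_apply_mul_prodWeight hρ hs]
    _ = sizeBias (ρ i) (fun z => f i z + (M - mean (ρ i) (f i))) y := by
        rw [sizeBias, hmean, ← mul_sum, Fintype.sum_eq_add_sum_compl i, if_pos rfl,
          sum_congr rfl fun j hj => if_neg (mem_compl.mp hj ∘ mem_singleton.mpr), hcompl]
        ring

variable (hM : mean (prodWeight ρ) fitness ≠ 0)
include hM

lemma fitVar_sizeBias_prodWeight :
    fitVar (sizeBias (prodWeight ρ) fitness)
      = ∑ i, centralMoment (ρ i) (↑) 2
        + (∑ i, centralMoment (ρ i) (↑) 3) / mean (prodWeight ρ) fitness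
        - (∑ i, centralMoment (ρ i) (↑) 2) ^ 2 / mean (prodWeight ρ) fitness ^ 2 := by
  change centralMoment (sizeBias (prodWeight ρ) fitness) fitness 2 = _
  rw [fitness_eq_sum] at hM ⊢
  rw [centralMoment_two_sizeBias (support_prodWeight_subset hs) (sum_prodWeight hρ) hM,
    centralMoment_prodWeight_sum hρ hs (fun _ z => (z : ℝ)) two_ne_zero (by norm_num),
    centralMoment_prodWeight_sum hρ hs (fun _ z => (z : ℝ)) three_ne_zero le_rfl]

lemma fitVar_recomb_sizeBias_prodWeight :
    fitVar (recomb (sizeBias (prodWeight ρ) fitness))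
      = ∑ i, (centralMoment (ρ i) (↑) 2
        + centralMoment (ρ i) (↑) 3 / mean (prodWeight ρ) fitness
        - centralMoment (ρ i) (↑) 2 ^ 2 / mean (prodWeight ρ) fitness ^ 2) := by
  rw [fitness_eq_sum] at hM ⊢
  set M := mean (prodWeight ρ) fun x : Fin ℓ → ℤ => ∑ l, ((x l : ℤ) : ℝ)
  set ψ : Fin ℓ → ℤ → ℝ := fun i => sizeBias (ρ i) fun y => (y : ℝ) + (M - mean (ρ i) (↑))
  have hMi : ∀ i, mean (ρ i) (↑) + (M - mean (ρ i) (↑)) = M := fun i => by ring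
  have hrecomb : recomb (sizeBias (prodWeight ρ) fun x => ∑ l, ((x l : ℤ) : ℝ)) = prodWeight ψ :=
    funext fun x => prod_congr rfl fun i _ =>
      congrFun (marginal_sizeBias_prodWeight hρ hs (fun _ z => (z : ℝ)) i) (x i)
  have hψs : ∀ i, support (ψ i) ⊆ s i := fun i => support_sizeBias_subset (hs i) _
  have hψρ : ∀ i, ∑ y ∈ s i, ψ i y = 1 := fun i =>
    sum_sizeBias (hs i) (hρ i) (by rw [mean_add_const (hs i) (hρ i), hMi]; exact hM)
  change centralMoment (recomb _) fitness 2 = _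
  rw [hrecomb, fitness_eq_sum,
    centralMoment_prodWeight_sum hψρ hψs (fun _ z => (z : ℝ)) two_ne_zero (by norm_num)]
  refine sum_congr rfl fun i _ => ?_
  rw [centralMoment_two_sizeBias_add_const (hs i) (hρ i) _ (by rw [hMi]; exact hM), hMi]

end Loci

end Selection

open Selection

/-- Theorem 1 of the paper: starting from a population at linkage
equilibrium, after selection the effect of recombination on fitness variance is
`V(Rec(φ*)) − V(φ*) = (Σ_{i≠j} VᵢVⱼ)/M² ≥ 0`, i.e. `LD₂(φ*) = −(Σ_{i≠j} VᵢVⱼ)/M² ≤ 0`. -/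
theorem recombination_variance_gain (ℓ : ℕ) (φi : Fin ℓ → ℤ → ℝ)
    (hnn : ∀ i x, 0 ≤ φi i x)
    (hfin : ∀ i, (Function.support (φi i)).Finite)
    (hsum : ∀ i, ∑ᶠ x : ℤ, φi i x = 1)
    (φ : (Fin ℓ → ℤ) → ℝ) (hφ : φ = fun x => ∏ i, φi i (x i))
    (M : ℝ) (hM : M = fitMean φ) (hMpos : 0 < M)
    (V : Fin ℓ → ℝ) (hVi : ∀ i, V i = fvar (φi i))
    (φStar : (Fin ℓ → ℤ) → ℝ) (hφStar : φStar = fun x => (fitness x / M) * φ x) :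
    fitVar (recomb φStar) - fitVar φStar
        = (∑ i, ∑ j, if i ≠ j then V i * V j else 0) / M ^ 2
    ∧ 0 ≤ fitVar (recomb φStar) - fitVar φStar := by
  obtain rfl : φ = prodWeight φi := hφ
  obtain rfl : M = mean (prodWeight φi) fitness := hM
  obtain rfl : φStar = sizeBias (prodWeight φi) fitness := hφStar
  obtain rfl : V = fun i => centralMoment (φi i) (↑) 2 := funext hVi
  have hs : ∀ i, support (φi i) ⊆ (hfin i).toFinset := fun i => (hfin i).coe_toFinset.ge
  have hρ : ∀ i, ∑ y ∈ (hfin i).toFinset, φi i y = 1 := fun i =>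
    (finsum_eq_sum _ (hfin i)).symm.trans (hsum i)
  have hgain : fitVar (recomb (sizeBias (prodWeight φi) fitness))
      - fitVar (sizeBias (prodWeight φi) fitness)
      = ((∑ i, centralMoment (φi i) (↑) 2) ^ 2 - ∑ i, centralMoment (φi i) (↑) 2 ^ 2)
        / mean (prodWeight φi) fitness ^ 2 := by
    rw [fitVar_recomb_sizeBias_prodWeight hρ hs hMpos.ne',
      fitVar_sizeBias_prodWeight hρ hs hMpos.ne']
    simp only [sum_add_distrib, sum_sub_distrib, ← sum_div]
    ring
  rw [hgain, sq_sum_sub_sum_sq]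
  refine ⟨rfl, div_nonneg (sum_nonneg fun i _ => sum_nonneg fun j _ => ?_) (sq_nonneg _)⟩
  split_ifs
  · exact mul_nonneg (centralMoment_nonneg (hnn i) _ even_two)
      (centralMoment_nonneg (hnn j) _ even_two)
  · exact le_rfl
end

section
/- Define, for probability distributions ψ₁, ψ₂ on ℤ, ψ₂ ≼ ψ₁ iff for all b₁ < b₂ in ℤ, ψ₁(b₁)ψ₂(b₂) ≤ ψ₁(b₂)ψ₂(b₁). Let μ be a mutation distribution supported on {−1,0,1} with μ(0) > μ(−1) > μ(1), and let Mut(ψ)(x) = Σ_d ψ(d)μ(x − d). Then ψ₂ ≼ ψ₁ implies Mut(ψ₂) ≼ Mut(ψ₁). -/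
/-!
Both sides of the inequality are bilinear in `(ψ₁, ψ₂)`; expanding the difference as a double
sum over pairs `(d, e)` and symmetrising in `d ↔ e`, each pair contributes the product of a
`2 × 2` minor of `(ψ₁, ψ₂)` and one of the translation kernel `(b, d) ↦ μ (b - d)`. Both minors
have a sign for `d < e`: the first by `ψ₂ ≼ ψ₁`, the second because the only nonvanishing
nontrivial minor of the kernel is `μ 0 ^ 2 - μ (-1) * μ 1 ≥ 0`.
-/

open scoped BigOperators

/-- Likelihood-ratio order: `ψ₂ ≼ ψ₁`. -/
def preceq (ψ₂ ψ₁ : ℤ → ℝ) : Prop :=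
  ∀ b₁ b₂ : ℤ, b₁ < b₂ → ψ₁ b₁ * ψ₂ b₂ ≤ ψ₁ b₂ * ψ₂ b₁

/-- Mutation: convolution with the mutation distribution `μ`. -/
noncomputable def mutate (μ : ℤ → ℝ) (ψ : ℤ → ℝ) : ℤ → ℝ :=
  fun x => ∑ᶠ d : ℤ, ψ d * μ (x - d)

open Finset

theorem sum_mul_sum_le_of_preceq (S : Finset ℤ) {p₁ p₂ q₁ q₂ : ℤ → ℝ}
    (hp : preceq p₂ p₁) (hq : preceq q₁ q₂) :
    (∑ d ∈ S, p₁ d * q₁ d) * (∑ e ∈ S, p₂ e * q₂ e) ≤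
      (∑ d ∈ S, p₁ d * q₂ d) * (∑ e ∈ S, p₂ e * q₁ e) := by
  set T : ℤ → ℤ → ℝ := fun d e => p₁ d * q₂ d * (p₂ e * q₁ e) - p₁ d * q₁ d * (p₂ e * q₂ e)
  have hT : ∀ d e, T d e + T e d = (p₁ d * p₂ e - p₁ e * p₂ d) * (q₂ d * q₁ e - q₁ d * q₂ e) :=
    fun d e => by ring
  have hpair : ∀ d e, 0 ≤ T d e + T e d := by
    intro d e
    rcases lt_trichotomy d e with hde | rfl | hde
    · rw [hT]
      exact mul_nonneg_of_nonpos_of_nonpos (by linarith [hp d e hde]) (by linarith [hq d e hde])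
    · rw [hT, sub_self, zero_mul]
    · rw [add_comm, hT]
      exact mul_nonneg_of_nonpos_of_nonpos (by linarith [hp e d hde]) (by linarith [hq e d hde])
  have hdiff : (∑ d ∈ S, p₁ d * q₂ d) * (∑ e ∈ S, p₂ e * q₁ e) -
      (∑ d ∈ S, p₁ d * q₁ d) * (∑ e ∈ S, p₂ e * q₂ e) = ∑ d ∈ S, ∑ e ∈ S, T d e := by
    simp only [T, sum_mul_sum, ← sum_sub_distrib]
  have hsymm : 2 * ∑ d ∈ S, ∑ e ∈ S, T d e = ∑ d ∈ S, ∑ e ∈ S, (T d e + T e d) := by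
    rw [two_mul]
    nth_rewrite 2 [sum_comm]
    simp only [sum_add_distrib]
  have hnonneg : 0 ≤ ∑ d ∈ S, ∑ e ∈ S, (T d e + T e d) :=
    sum_nonneg fun d _ => sum_nonneg fun e _ => hpair d e
  linarith

theorem preceq_translate {μ : ℤ → ℝ} (hsupp : ∀ x : ℤ, x ≠ -1 → x ≠ 0 → x ≠ 1 → μ x = 0)
    (hnn : ∀ x, 0 ≤ μ x) (hlc : μ (-1) * μ 1 ≤ μ 0 ^ 2) {b₁ b₂ : ℤ} (hb : b₁ < b₂) :
    preceq (fun d => μ (b₁ - d)) (fun d => μ (b₂ - d)) := by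
  intro d e hde
  show μ (b₂ - d) * μ (b₁ - e) ≤ μ (b₂ - e) * μ (b₁ - d)
  by_cases hcorner : b₁ - e = -1 ∧ b₂ - d = 1
  · rw [hcorner.1, hcorner.2, show b₂ - e = 0 by omega, show b₁ - d = 0 by omega]
    linarith
  · have hmem : ∀ x, μ x ≠ 0 → -1 ≤ x ∧ x ≤ 1 := fun x hx => by
      by_contra hout
      exact hx (hsupp x (by omega) (by omega) (by omega))
    have hzero : μ (b₂ - d) * μ (b₁ - e) = 0 := by
      by_contra hne
      obtain ⟨h₂, h₁⟩ := mul_ne_zero_iff.mp hne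
      have := hmem _ h₂
      have := hmem _ h₁
      omega
    rw [hzero]
    exact mul_nonneg (hnn _) (hnn _)

theorem mutate_eq_sum {μ : ℤ → ℝ} (ψ : ℤ → ℝ) {x : ℤ} {S : Finset ℤ}
    (hS : ∀ d ∉ S, μ (x - d) = 0) : mutate μ ψ x = ∑ d ∈ S, ψ d * μ (x - d) :=
  finsum_eq_sum_of_support_subset _ fun d hd => by
    by_contra hdS
    exact hd (show ψ d * μ (x - d) = 0 by rw [hS d hdS, mul_zero])

theorem mutation_preserves_preceq_general (μ ψ₁ ψ₂ : ℤ → ℝ)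
    (hμsupp : ∀ x : ℤ, x ≠ -1 → x ≠ 0 → x ≠ 1 → μ x = 0)
    (hμ1 : 0 ≤ μ 1) (hμ01 : μ 1 < μ (-1)) (hμ0 : μ (-1) < μ 0)
    (h : preceq ψ₂ ψ₁) :
    preceq (mutate μ ψ₂) (mutate μ ψ₁) := by
  intro b₁ b₂ hb
  have hnn : ∀ x, 0 ≤ μ x := fun x => by
    by_cases hx : x = -1 ∨ x = 0 ∨ x = 1
    · rcases hx with rfl | rfl | rfl <;> linarith
    · exact (hμsupp x (by omega) (by omega) (by omega)).ge
  have hlc : μ (-1) * μ 1 ≤ μ 0 ^ 2 := by nlinarith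
  have hS : ∀ x ∈ ({b₁, b₂} : Finset ℤ), ∀ d ∉ Icc (b₁ - 1) (b₂ + 1), μ (x - d) = 0 := by
    intro x hx d hd
    simp only [mem_insert, mem_singleton, mem_Icc] at hx hd
    exact hμsupp _ (by omega) (by omega) (by omega)
  simp only [mutate_eq_sum _ (hS b₁ (by simp)), mutate_eq_sum _ (hS b₂ (by simp))]
  exact sum_mul_sum_le_of_preceq _ h (preceq_translate hμsupp hnn hlc hb)

/-- Lemma: mutation preserves `≼`: if `μ` is supported on
`{−1,0,1}` with `μ(0) > μ(−1) > μ(1) ≥ 0` then `ψ₂ ≼ ψ₁` implies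
`Mut(ψ₂) ≼ Mut(ψ₁)`. -/
theorem mutation_preserves_preceq (μ ψ₁ ψ₂ : ℤ → ℝ)
    (hμsupp : ∀ x : ℤ, x ≠ -1 → x ≠ 0 → x ≠ 1 → μ x = 0)
    (hμsum : μ (-1) + μ 0 + μ 1 = 1)
    (hμ1 : 0 ≤ μ 1) (hμ01 : μ 1 < μ (-1)) (hμ0 : μ (-1) < μ 0)
    (h₁nn : ∀ x, 0 ≤ ψ₁ x) (h₂nn : ∀ x, 0 ≤ ψ₂ x)
    (h₁fin : (Function.support ψ₁).Finite) (h₂fin : (Function.support ψ₂).Finite)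
    (h₁sum : ∑ᶠ x : ℤ, ψ₁ x = 1) (h₂sum : ∑ᶠ x : ℤ, ψ₂ x = 1)
    (h : preceq ψ₂ ψ₁) :
    preceq (mutate μ ψ₂) (mutate μ ψ₁) :=
  mutation_preserves_preceq_general μ ψ₁ ψ₂ hμsupp hμ1 hμ01 hμ0 h
end

section
/- Define ψ₂ ≼ ψ₁ iff for all b₁ < b₂ in ℤ, ψ₁(b₁)ψ₂(b₂) ≤ ψ₁(b₂)ψ₂(b₁), and ψ₂ ≺ ψ₁ if moreover strict inequality holds for some pair b₁ < b₂. For W ∈ ℝ, define Sel_W(φ)(x) = (x + W)φ(x)/s with s = E[φ] + W, assuming x + W > 0 on the supports. If W₁ ≤ W₂ and ψ₂ ≼ ψ₁, then Sel_{W₂}(ψ₂) ≼ Sel_{W₁}(ψ₁). Moreover if W₁ < W₂, ψ₂ ≼ ψ₁, and at least one of ψ₁, ψ₂ has support of size greater than one, then Sel_{W₂}(ψ₂) ≺ Sel_{W₁}(ψ₁). -/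
open scoped BigOperators

/-- Strict likelihood-ratio order: `ψ₂ ≺ ψ₁`. -/
def precLt (ψ₂ ψ₁ : ℤ → ℝ) : Prop :=
  preceq ψ₂ ψ₁ ∧ ∃ b₁ b₂ : ℤ, b₁ < b₂ ∧ ψ₁ b₁ * ψ₂ b₂ < ψ₁ b₂ * ψ₂ b₁

/-- A distribution is non-trivial if its support has more than one point. -/
def NonTrivial (ψ : ℤ → ℝ) : Prop := ∃ x y : ℤ, x ≠ y ∧ ψ x ≠ 0 ∧ ψ y ≠ 0

/-- The weighted selection operator `Sel_W(φ)(x) = (x+W)·φ(x)/(E[φ]+W)`. -/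
noncomputable def selW (W : ℝ) (φ : ℤ → ℝ) : ℤ → ℝ :=
  fun x => ((x : ℝ) + W) * φ x / (fmean φ + W)

/-!
Selection multiplies `ψᵢ` by the weight `x ↦ x + Wᵢ` and rescales by a positive constant.
Rescaling does not affect the likelihood-ratio order, and the weights are themselves
likelihood-ratio ordered: `(b₂ + W₁)(b₁ + W₂) - (b₁ + W₁)(b₂ + W₂) = (b₂ - b₁)(W₂ - W₁)`.
A product of ordered pairs is ordered, strictly at any `b₁ < b₂` with `ψ₂ b₁ ψ₁ b₂ ≠ 0`
where the weights are strictly ordered; such a pair exists as soon as one of the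
distributions is non-trivial.
-/

lemma exists_ne_zero_of_finsum_ne_zero {α : Type*} {f : α → ℝ} (h : ∑ᶠ x, f x ≠ 0) :
    ∃ x, f x ≠ 0 := by
  by_contra! hf
  exact h (finsum_eq_zero_of_forall_eq_zero hf)

lemma NonTrivial.exists_lt {ψ : ℤ → ℝ} (hψ : NonTrivial ψ) :
    ∃ x y : ℤ, x < y ∧ ψ x ≠ 0 ∧ ψ y ≠ 0 := by
  obtain ⟨x, y, hxy, hx, hy⟩ := hψ
  rcases hxy.lt_or_gt with hlt | hlt
  · exact ⟨x, y, hlt, hx, hy⟩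
  · exact ⟨y, x, hlt, hy, hx⟩

lemma add_mul_add_le_add_mul_add {a b V W : ℝ} (hab : a ≤ b) (hVW : V ≤ W) :
    (a + V) * (b + W) ≤ (b + V) * (a + W) := by
  nlinarith [mul_nonneg (sub_nonneg.2 hab) (sub_nonneg.2 hVW)]

lemma add_mul_add_lt_add_mul_add {a b V W : ℝ} (hab : a < b) (hVW : V < W) :
    (a + V) * (b + W) < (b + V) * (a + W) := by
  nlinarith [mul_pos (sub_pos.2 hab) (sub_pos.2 hVW)]

lemma preceq_add_const {W₁ W₂ : ℝ} (hW : W₁ ≤ W₂) :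
    preceq (fun x : ℤ => (x : ℝ) + W₂) (fun x : ℤ => (x : ℝ) + W₁) :=
  fun _ _ hb => add_mul_add_le_add_mul_add (Int.cast_le.2 hb.le) hW

lemma preceq_smul {f g : ℤ → ℝ} {c d : ℝ} (hc : 0 ≤ c) (hd : 0 ≤ d) (h : preceq g f) :
    preceq (c • g) (d • f) := fun b₁ b₂ hb => by
  simp only [Pi.smul_apply, smul_eq_mul]
  nlinarith [mul_le_mul_of_nonneg_left (h b₁ b₂ hb) (mul_nonneg hc hd)]

lemma precLt_smul {f g : ℤ → ℝ} {c d : ℝ} (hc : 0 < c) (hd : 0 < d) (h : precLt g f) :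
    precLt (c • g) (d • f) := by
  obtain ⟨hle, b₁, b₂, hb, hlt⟩ := h
  refine ⟨preceq_smul hc.le hd.le hle, b₁, b₂, hb, ?_⟩
  simp only [Pi.smul_apply, smul_eq_mul]
  nlinarith [mul_lt_mul_of_pos_left hlt (mul_pos hc hd)]

section Weighted

variable {f g u v : ℤ → ℝ} (hf : ∀ x, 0 ≤ f x) (hg : ∀ x, 0 ≤ g x)
  (hu : ∀ x, f x ≠ 0 → 0 < u x) (hv : ∀ x, g x ≠ 0 → 0 < v x)

include hf hu in
lemma mul_nonneg_of_pos_on_support (x : ℤ) : 0 ≤ (u * f) x := by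
  by_cases hx : f x = 0
  · simp [hx]
  · exact mul_nonneg (hu x hx).le (hf x)

include hf hg in
lemma preceq.ne_zero_of_ne_zero (h : preceq g f) {b₁ b₂ : ℤ} (hb : b₁ < b₂)
    (hf₁ : f b₁ ≠ 0) (hg₂ : g b₂ ≠ 0) : f b₂ ≠ 0 ∧ g b₁ ≠ 0 := by
  have hpos : 0 < f b₂ * g b₁ :=
    (mul_pos ((hf b₁).lt_of_ne' hf₁) ((hg b₂).lt_of_ne' hg₂)).trans_le (h b₁ b₂ hb)
  exact ⟨left_ne_zero_of_mul hpos.ne', right_ne_zero_of_mul hpos.ne'⟩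

include hf hg hu hv in
lemma preceq_mul (h : preceq g f) (hw : preceq v u) : preceq (v * g) (u * f) := by
  intro b₁ b₂ hb
  simp only [Pi.mul_apply]
  by_cases h₀ : f b₁ = 0 ∨ g b₂ = 0
  · rcases h₀ with h₀ | h₀ <;> simp only [h₀, mul_zero, zero_mul] <;>
      exact mul_nonneg (mul_nonneg_of_pos_on_support hf hu b₂)
        (mul_nonneg_of_pos_on_support hg hv b₁)
  obtain ⟨hf₁, hg₂⟩ := not_or.1 h₀
  obtain ⟨hf₂, hg₁⟩ := h.ne_zero_of_ne_zero hf hg hb hf₁ hg₂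
  calc u b₁ * f b₁ * (v b₂ * g b₂) = (u b₁ * v b₂) * (f b₁ * g b₂) := by ring
    _ ≤ (u b₂ * v b₁) * (f b₂ * g b₁) :=
        mul_le_mul (hw b₁ b₂ hb) (h b₁ b₂ hb) (mul_nonneg (hf b₁) (hg b₂))
          (mul_pos (hu b₂ hf₂) (hv b₁ hg₁)).le
    _ = u b₂ * f b₂ * (v b₁ * g b₁) := by ring

include hf hg hu hv in
lemma mul_cross_lt (h : preceq g f) {b₁ b₂ : ℤ} (hb : b₁ < b₂)
    (hw : u b₁ * v b₂ < u b₂ * v b₁) (hf₂ : f b₂ ≠ 0) (hg₁ : g b₁ ≠ 0) :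
    (u * f) b₁ * (v * g) b₂ < (u * f) b₂ * (v * g) b₁ := by
  simp only [Pi.mul_apply]
  have hfg : 0 < f b₂ * g b₁ := mul_pos ((hf b₂).lt_of_ne' hf₂) ((hg b₁).lt_of_ne' hg₁)
  have huv : 0 < u b₂ * v b₁ := mul_pos (hu b₂ hf₂) (hv b₁ hg₁)
  by_cases h₀ : f b₁ = 0 ∨ g b₂ = 0
  · rcases h₀ with h₀ | h₀ <;> simp only [h₀, mul_zero, zero_mul] <;> nlinarith
  obtain ⟨hf₁, hg₂⟩ := not_or.1 h₀
  calc u b₁ * f b₁ * (v b₂ * g b₂) = (u b₁ * v b₂) * (f b₁ * g b₂) := by ring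
    _ ≤ (u b₁ * v b₂) * (f b₂ * g b₁) :=
        mul_le_mul_of_nonneg_left (h b₁ b₂ hb) (mul_pos (hu b₁ hf₁) (hv b₂ hg₂)).le
    _ < (u b₂ * v b₁) * (f b₂ * g b₁) := mul_lt_mul_of_pos_right hw hfg
    _ = u b₂ * f b₂ * (v b₁ * g b₁) := by ring

end Weighted

lemma preceq.exists_lt_ne_zero {f g : ℤ → ℝ} (hf : ∀ x, 0 ≤ f x) (hg : ∀ x, 0 ≤ g x)
    (h : preceq g f) (hf₀ : ∃ x, f x ≠ 0) (hg₀ : ∃ x, g x ≠ 0)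
    (hnt : NonTrivial f ∨ NonTrivial g) :
    ∃ b₁ b₂ : ℤ, b₁ < b₂ ∧ f b₂ ≠ 0 ∧ g b₁ ≠ 0 := by
  by_contra! H
  rcases hnt with hnt | hnt <;> obtain ⟨x, y, hxy, hx, hy⟩ := hnt.exists_lt
  · obtain ⟨a, ha⟩ := hg₀
    rcases lt_or_ge a y with hay | hya
    · exact ha (H a y hay hy)
    · exact (h.ne_zero_of_ne_zero hf hg (hxy.trans_le hya) hx ha).2 (H x y hxy hy)
  · obtain ⟨c, hc⟩ := hf₀
    rcases lt_or_ge x c with hxc | hcx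
    · exact hx (H x c hxc hc)
    · exact hx (H x y hxy (h.ne_zero_of_ne_zero hf hg (hcx.trans_lt hxy) hc hy).1)

lemma selW_eq_smul (W : ℝ) (φ : ℤ → ℝ) :
    selW W φ = (fmean φ + W)⁻¹ • ((fun x : ℤ => (x : ℝ) + W) * φ) := by
  funext x
  simp only [selW, Pi.smul_apply, Pi.mul_apply, smul_eq_mul]
  ring

theorem selection_preserves_preceq_general (ψ₁ ψ₂ : ℤ → ℝ) (W₁ W₂ : ℝ)
    (h₁nn : ∀ x, 0 ≤ ψ₁ x) (h₂nn : ∀ x, 0 ≤ ψ₂ x)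
    (h₁sum : ∑ᶠ x : ℤ, ψ₁ x = 1) (h₂sum : ∑ᶠ x : ℤ, ψ₂ x = 1)
    (h₁pos : ∀ x : ℤ, ψ₁ x ≠ 0 → 0 < (x : ℝ) + W₁)
    (h₂pos : ∀ x : ℤ, ψ₂ x ≠ 0 → 0 < (x : ℝ) + W₂)
    (h₁norm : 0 < fmean ψ₁ + W₁) (h₂norm : 0 < fmean ψ₂ + W₂)
    (h : preceq ψ₂ ψ₁) (hW : W₁ ≤ W₂) :
    preceq (selW W₂ ψ₂) (selW W₁ ψ₁)
    ∧ (W₁ < W₂ → (NonTrivial ψ₁ ∨ NonTrivial ψ₂) →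
        precLt (selW W₂ ψ₂) (selW W₁ ψ₁)) := by
  rw [selW_eq_smul, selW_eq_smul]
  have hc₁ := inv_pos.2 h₁norm
  have hc₂ := inv_pos.2 h₂norm
  have hle := preceq_mul h₁nn h₂nn h₁pos h₂pos h (preceq_add_const hW)
  refine ⟨preceq_smul hc₂.le hc₁.le hle, fun hW' hnt => precLt_smul hc₂ hc₁ ⟨hle, ?_⟩⟩
  obtain ⟨b₁, b₂, hb, hψ₁, hψ₂⟩ := h.exists_lt_ne_zero h₁nn h₂nn
    (exists_ne_zero_of_finsum_ne_zero (h₁sum ▸ one_ne_zero))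
    (exists_ne_zero_of_finsum_ne_zero (h₂sum ▸ one_ne_zero)) hnt
  exact ⟨b₁, b₂, hb, mul_cross_lt h₁nn h₂nn h₁pos h₂pos h hb
    (add_mul_add_lt_add_mul_add (Int.cast_lt.2 hb) hW') hψ₁ hψ₂⟩

/-- Lemma: selection preserves `≼`: if `W₁ ≤ W₂` and `ψ₂ ≼ ψ₁`,
then `Sel_{W₂}(ψ₂) ≼ Sel_{W₁}(ψ₁)`; and if moreover `W₁ < W₂` and one of the
distributions is non-trivial, then `Sel_{W₂}(ψ₂) ≺ Sel_{W₁}(ψ₁)`. -/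
theorem selection_preserves_preceq (ψ₁ ψ₂ : ℤ → ℝ) (W₁ W₂ : ℝ)
    (h₁nn : ∀ x, 0 ≤ ψ₁ x) (h₂nn : ∀ x, 0 ≤ ψ₂ x)
    (h₁fin : (Function.support ψ₁).Finite) (h₂fin : (Function.support ψ₂).Finite)
    (h₁sum : ∑ᶠ x : ℤ, ψ₁ x = 1) (h₂sum : ∑ᶠ x : ℤ, ψ₂ x = 1)
    (h₁pos : ∀ x : ℤ, ψ₁ x ≠ 0 → 0 < (x : ℝ) + W₁)
    (h₂pos : ∀ x : ℤ, ψ₂ x ≠ 0 → 0 < (x : ℝ) + W₂)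
    (h₁norm : 0 < fmean ψ₁ + W₁) (h₂norm : 0 < fmean ψ₂ + W₂)
    (h : preceq ψ₂ ψ₁) (hW : W₁ ≤ W₂) :
    preceq (selW W₂ ψ₂) (selW W₁ ψ₁)
    ∧ (W₁ < W₂ → (NonTrivial ψ₁ ∨ NonTrivial ψ₂) →
        precLt (selW W₂ ψ₂) (selW W₁ ψ₁)) :=
  selection_preserves_preceq_general ψ₁ ψ₂ W₁ W₂ h₁nn h₂nn h₁sum h₂sum h₁pos h₂pos h₁norm h₂norm h
    hW
end

section
/- Suppose ψ is an eigenvector (fixed point up to normalization) of the ℓ-locus operator Sel·Mut_{ac} on {1,...,N}^ℓ with eigenvalue λ. Then λ < Nℓτ^ℓ, where τ = b + 2√(ac). -/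
/-!
Weight the genotypes by `w x = ∏ᵢ r ^ xᵢ` with `r = √(a/c)`: this is the diagonal of the
conjugation `C` that turns `Mut_{ac}` into the symmetric tridiagonal matrix with entries `b` and
`√(ac)`. Hence the `r`-weighted column sums of the one-locus matrix are at most `τ r ^ s`, strictly
so in the top state, and the row vector `w` satisfies `w · Sel·Mut_{ac} < Nℓτ^ℓ w` entrywise:
if some locus of the column `y` is below the top then `F y < Nℓ`, otherwise every locus is at the
top. Pairing the eigenvalue equation with `w` gives `λ ⟨w, ψ⟩ < Nℓτ^ℓ ⟨w, ψ⟩` with `⟨w, ψ⟩ > 0`.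
-/

open Matrix

/-- One-locus mutation-with-truncation matrix: diagonal `b`, superdiagonal `a`,
subdiagonal `c`. -/
noncomputable def mut1 (a b c : ℝ) {N : ℕ} (i j : Fin N) : ℝ :=
  if i = j then b else if (j : ℕ) = (i : ℕ) + 1 then a
    else if (i : ℕ) = (j : ℕ) + 1 then c else 0

/-- The `ℓ`-locus operator `Sel·Mut_{ac}` on `{1,...,N}^ℓ` (index `x i : Fin N`
represents gene fitness `x i + 1`). -/
noncomputable def selMut (a b c : ℝ) (ℓ N : ℕ) :
    Matrix (Fin ℓ → Fin N) (Fin ℓ → Fin N) ℝ :=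
  Matrix.of fun x y => (∑ i, (((x i : ℕ) : ℝ) + 1)) * ∏ i, mut1 a b c (x i) (y i)

open Finset

theorem eigenvalue_lt_of_vecMul_lt {ι : Type*} [Fintype ι] {M : Matrix ι ι ℝ} {w ψ : ι → ℝ}
    {μ lam : ℝ} (hw : 0 ≤ w) (hwM : ∀ y, (w ᵥ* M) y < μ * w y) (hψ : 0 ≤ ψ) (hψne : ψ ≠ 0)
    (heig : M *ᵥ ψ = lam • ψ) : lam < μ := by
  obtain ⟨y₀, hy₀⟩ := Function.ne_iff.mp hψne
  have key : lam * (w ⬝ᵥ ψ) < μ * (w ⬝ᵥ ψ) := calc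
    lam * (w ⬝ᵥ ψ) = w ⬝ᵥ (M *ᵥ ψ) := by rw [heig, dotProduct_smul, smul_eq_mul]
    _ = (w ᵥ* M) ⬝ᵥ ψ := dotProduct_mulVec ..
    _ < (μ • w) ⬝ᵥ ψ := sum_lt_sum
        (fun y _ => mul_le_mul_of_nonneg_right (hwM y).le (hψ y))
        ⟨y₀, mem_univ _, mul_lt_mul_of_pos_right (hwM y₀) ((hψ y₀).lt_of_ne' hy₀)⟩
    _ = μ * (w ⬝ᵥ ψ) := by rw [smul_dotProduct, smul_eq_mul]
  exact lt_of_mul_lt_mul_right key (dotProduct_nonneg_of_nonneg hw hψ)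

section

variable {a b c : ℝ} {ℓ N : ℕ}

theorem mut1_nonneg (ha : 0 ≤ a) (hb : 0 ≤ b) (hc : 0 ≤ c) (i j : Fin N) : 0 ≤ mut1 a b c i j := by
  unfold mut1; split_ifs <;> first | assumption | exact le_rfl

@[simp] theorem mut1_self (i : Fin N) : mut1 a b c i i = b := if_pos rfl

theorem mut1_eq (i j : Fin N) : mut1 a b c i j =
    (if (i : ℕ) = j then b else 0) + (if (j : ℕ) = i + 1 then a else 0) +
      (if (i : ℕ) = j + 1 then c else 0) := by
  simp only [mut1, Fin.ext_iff]
  split_ifs <;> first | omega | ring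

theorem sum_pow_mul_mut1 (r : ℝ) (j : Fin N) :
    ∑ i : Fin N, r ^ (i : ℕ) * mut1 a b c i j = r ^ (j : ℕ) * b +
      (if 0 < (j : ℕ) then r ^ ((j : ℕ) - 1) * a else 0) +
      (if (j : ℕ) + 1 < N then r ^ ((j : ℕ) + 1) * c else 0) := by
  simp only [mut1_eq, mul_add, sum_add_distrib]
  rw [Fin.sum_univ_eq_sum_range (fun i => r ^ i * (if i = (j : ℕ) then b else 0)),
    Fin.sum_univ_eq_sum_range (fun i => r ^ i * (if (j : ℕ) = i + 1 then a else 0)),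
    Fin.sum_univ_eq_sum_range (fun i => r ^ i * (if i = (j : ℕ) + 1 then c else 0))]
  have hmid : ∑ i ∈ range N, r ^ i * (if (j : ℕ) = i + 1 then a else 0) =
      if 0 < (j : ℕ) then r ^ ((j : ℕ) - 1) * a else 0 := by
    obtain ⟨j, hj⟩ := j
    cases j with
    | zero => simp
    | succ k =>
      simp only [add_left_inj, mul_ite, mul_zero, sum_ite_eq, mem_range]
      simp [show k < N by omega]
  rw [hmid]
  simp only [mul_ite, mul_zero, sum_ite_eq', mem_range, Fin.is_lt, if_true]

theorem sum_sqrt_div_pow_mul_mut1 (ha : 0 ≤ a) (hc : 0 < c) (j : Fin N) :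
    ∑ i : Fin N, √(a / c) ^ (i : ℕ) * mut1 a b c i j =
      (b + (if 0 < (j : ℕ) then √(a * c) else 0) + (if (j : ℕ) + 1 < N then √(a * c) else 0)) *
        √(a / c) ^ (j : ℕ) := by
  have hsub : √(a * c) * √(a / c) = a := by
    rw [← Real.sqrt_mul (by positivity), show a * c * (a / c) = a ^ 2 by field_simp,
      Real.sqrt_sq ha]
  have hsup : √(a / c) * c = √(a * c) := by
    rw [← Real.sqrt_sq hc.le, ← Real.sqrt_mul (by positivity), Real.sqrt_sq hc.le,
      show a / c * c ^ 2 = a * c by field_simp]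
  have hlow : 0 < (j : ℕ) → √(a / c) ^ ((j : ℕ) - 1) * a = √(a * c) * √(a / c) ^ (j : ℕ) := by
    intro hj
    calc √(a / c) ^ ((j : ℕ) - 1) * a = √(a / c) ^ ((j : ℕ) - 1) * (√(a * c) * √(a / c)) := by
          rw [hsub]
      _ = √(a * c) * √(a / c) ^ ((j : ℕ) - 1 + 1) := by ring
      _ = √(a * c) * √(a / c) ^ (j : ℕ) := by rw [Nat.sub_add_cancel hj]
  have hhigh : √(a / c) ^ ((j : ℕ) + 1) * c = √(a * c) * √(a / c) ^ (j : ℕ) := by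
    rw [← hsup, pow_succ]
    ring
  rw [sum_pow_mul_mut1, hhigh]
  by_cases hj : 0 < (j : ℕ)
  · rw [if_pos hj, if_pos hj, hlow hj]; split_ifs <;> ring
  · rw [if_neg hj, if_neg hj]; split_ifs <;> ring

theorem sum_sqrt_div_pow_mul_mut1_le (ha : 0 ≤ a) (hc : 0 < c) (j : Fin N) :
    ∑ i : Fin N, √(a / c) ^ (i : ℕ) * mut1 a b c i j ≤ (b + 2 * √(a * c)) * √(a / c) ^ (j : ℕ) := by
  rw [sum_sqrt_div_pow_mul_mut1 ha hc]
  refine mul_le_mul_of_nonneg_right ?_ (by positivity)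
  split_ifs <;> linarith [Real.sqrt_nonneg (a * c)]

theorem sum_sqrt_div_pow_mul_mut1_lt_of_last (ha : 0 < a) (hc : 0 < c) {j : Fin N}
    (hj : (j : ℕ) + 1 = N) :
    ∑ i : Fin N, √(a / c) ^ (i : ℕ) * mut1 a b c i j < (b + 2 * √(a * c)) * √(a / c) ^ (j : ℕ) := by
  rw [sum_sqrt_div_pow_mul_mut1 ha.le hc, if_neg hj.not_lt]
  have : 0 < √(a * c) := by positivity
  refine mul_lt_mul_of_pos_right ?_ (by positivity)
  split_ifs <;> linarith

theorem sum_sqrt_div_pow_mul_mut1_pos (ha : 0 < a) (hb : 0 < b) (hc : 0 < c) (j : Fin N) :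
    0 < ∑ i : Fin N, √(a / c) ^ (i : ℕ) * mut1 a b c i j := by
  rw [sum_sqrt_div_pow_mul_mut1 ha.le hc]
  refine mul_pos ?_ (by positivity)
  split_ifs <;> linarith [Real.sqrt_nonneg (a * c)]

theorem sum_prod_mul_prod_eq_prod_sum {ι κ μ R : Type*} [Fintype ι] [DecidableEq ι] [Fintype κ]
    [CommSemiring R] (v : κ → R) (M : κ → μ → R) (y : ι → μ) :
    ∑ x : ι → κ, (∏ i, v (x i)) * ∏ i, M (x i) (y i) = ∏ i, ∑ k, v k * M k (y i) := by
  simp only [Fintype.prod_sum, prod_mul_distrib]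

theorem sum_val_add_one_le (x : Fin ℓ → Fin N) :
    ∑ i, (((x i : ℕ) : ℝ) + 1) ≤ N * ℓ := by
  calc ∑ i, (((x i : ℕ) : ℝ) + 1) ≤ ∑ _i : Fin ℓ, (N : ℝ) :=
        sum_le_sum fun i _ => by exact_mod_cast (x i).isLt
    _ = N * ℓ := by simp [mul_comm]

theorem sum_val_add_one_lt {x : Fin ℓ → Fin N} (hx : ∃ i, (x i : ℕ) + 1 < N) :
    ∑ i, (((x i : ℕ) : ℝ) + 1) < N * ℓ := by
  obtain ⟨i₀, hi₀⟩ := hx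
  calc ∑ i, (((x i : ℕ) : ℝ) + 1) < ∑ _i : Fin ℓ, (N : ℝ) :=
        sum_lt_sum (fun i _ => by exact_mod_cast (x i).isLt) ⟨i₀, mem_univ _, by exact_mod_cast hi₀⟩
    _ = N * ℓ := by simp [mul_comm]

def geomWeight (r : ℝ) (x : Fin ℓ → Fin N) : ℝ := ∏ i, r ^ (x i : ℕ)

theorem geomWeight_pos {r : ℝ} (hr : 0 < r) (x : Fin ℓ → Fin N) : 0 < geomWeight r x :=
  prod_pos fun _ _ => pow_pos hr _

theorem pow_mul_geomWeight (τ r : ℝ) (x : Fin ℓ → Fin N) :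
    τ ^ ℓ * geomWeight r x = ∏ i, τ * r ^ (x i : ℕ) := by
  rw [geomWeight, prod_mul_distrib, prod_const, card_univ, Fintype.card_fin]

theorem prod_sum_sqrt_div_pow_mul_mut1_le (ha : 0 < a) (hb : 0 < b) (hc : 0 < c)
    (y : Fin ℓ → Fin N) :
    ∏ i, ∑ t : Fin N, √(a / c) ^ (t : ℕ) * mut1 a b c t (y i) ≤
      (b + 2 * √(a * c)) ^ ℓ * geomWeight √(a / c) y := by
  rw [pow_mul_geomWeight]
  exact prod_le_prod (fun i _ => (sum_sqrt_div_pow_mul_mut1_pos ha hb hc _).le)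
    fun i _ => sum_sqrt_div_pow_mul_mut1_le ha.le hc _

theorem prod_sum_sqrt_div_pow_mul_mut1_lt (ha : 0 < a) (hb : 0 < b) (hc : 0 < c) (hℓ : 1 ≤ ℓ)
    {y : Fin ℓ → Fin N} (hy : ∀ i, (y i : ℕ) + 1 = N) :
    ∏ i, ∑ t : Fin N, √(a / c) ^ (t : ℕ) * mut1 a b c t (y i) <
      (b + 2 * √(a * c)) ^ ℓ * geomWeight √(a / c) y := by
  rw [pow_mul_geomWeight]
  exact prod_lt_prod (fun i _ => sum_sqrt_div_pow_mul_mut1_pos ha hb hc _)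
    (fun i _ => sum_sqrt_div_pow_mul_mut1_le ha.le hc _)
    ⟨⟨0, hℓ⟩, mem_univ _, sum_sqrt_div_pow_mul_mut1_lt_of_last ha hc (hy _)⟩

theorem vecMul_selMut_lt (ha : 0 < a) (hb : 0 < b) (hc : 0 < c) (hℓ : 1 ≤ ℓ)
    (y : Fin ℓ → Fin N) :
    (geomWeight √(a / c) ᵥ* selMut a b c ℓ N) y <
      N * ℓ * (b + 2 * √(a * c)) ^ ℓ * geomWeight √(a / c) y := by
  set W : (Fin ℓ → Fin N) → ℝ := geomWeight √(a / c)
  set F : (Fin ℓ → Fin N) → ℝ := fun x => ∑ i, (((x i : ℕ) : ℝ) + 1)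
  set K : (Fin ℓ → Fin N) → ℝ := fun x => ∏ i, mut1 a b c (x i) (y i)
  have hK : ∀ x, 0 ≤ W x * K x :=
    fun x => mul_nonneg (geomWeight_pos (by positivity) x).le
      (prod_nonneg fun i _ => mut1_nonneg ha.le hb.le hc.le _ _)
  have hvecMul : (W ᵥ* selMut a b c ℓ N) y = ∑ x, F x * (W x * K x) := by
    simp only [vecMul, dotProduct, selMut, of_apply]
    exact sum_congr rfl fun x _ => by ring
  have hcol : ∑ x, W x * K x = ∏ i, ∑ t : Fin N, √(a / c) ^ (t : ℕ) * mut1 a b c t (y i) :=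
    sum_prod_mul_prod_eq_prod_sum (fun t : Fin N => √(a / c) ^ (t : ℕ)) (mut1 a b c) y
  rw [hvecMul, mul_assoc]
  by_cases hy : ∃ i, (y i : ℕ) + 1 < N
  · calc ∑ x, F x * (W x * K x) < ∑ x, N * ℓ * (W x * K x) := by
          refine sum_lt_sum (fun x _ => mul_le_mul_of_nonneg_right (sum_val_add_one_le x) (hK x))
            ⟨y, mem_univ _, mul_lt_mul_of_pos_right (sum_val_add_one_lt hy) ?_⟩
          exact mul_pos (geomWeight_pos (by positivity) y)
            (prod_pos fun i _ => (mut1_self (y i)).symm ▸ hb)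
      _ ≤ _ := by
          rw [← mul_sum, hcol]
          gcongr
          exact prod_sum_sqrt_div_pow_mul_mut1_le ha hb hc y
  · simp only [not_exists, not_lt] at hy
    calc ∑ x, F x * (W x * K x) ≤ ∑ x, N * ℓ * (W x * K x) :=
          sum_le_sum fun x _ => mul_le_mul_of_nonneg_right (sum_val_add_one_le x) (hK x)
      _ < _ := by
          have hN : 0 < N := Fin.pos (y ⟨0, hℓ⟩)
          rw [← mul_sum, hcol]
          refine mul_lt_mul_of_pos_left ?_ (by positivity)
          exact prod_sum_sqrt_div_pow_mul_mut1_lt ha hb hc hℓ (y := y) fun i => by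
            have := (y i).isLt; have := hy i; omega

end

theorem asex_eigenvalue_bound_general (a b c : ℝ) (hc : 0 < c) (hca : c < a) (hab : a < b)
    (τ : ℝ) (hτ : τ = b + 2 * Real.sqrt (a * c))
    (ℓ N : ℕ) (hℓ : 1 ≤ ℓ)
    (ψ : (Fin ℓ → Fin N) → ℝ) (hψnn : ∀ x, 0 ≤ ψ x) (hψne : ψ ≠ 0)
    (lam : ℝ) (heig : (selMut a b c ℓ N).mulVec ψ = lam • ψ) :
    lam < (N : ℝ) * (ℓ : ℝ) * τ ^ ℓ := by
  have ha : 0 < a := hc.trans hca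
  subst hτ
  exact eigenvalue_lt_of_vecMul_lt (fun x => (geomWeight_pos (by positivity) x).le)
    (vecMul_selMut_lt ha (ha.trans hab) hc hℓ) hψnn hψne heig

/-- Lemma: bound for the asex fixed point: any non-negative
eigenvector of `Sel·Mut_{ac}` has eigenvalue `λ < Nℓτ^ℓ`, where `τ = b + 2√(ac)`. -/
theorem asex_eigenvalue_bound (a b c : ℝ) (hc : 0 < c) (hca : c < a) (hab : a < b)
    (habc : a + b + c = 1) (τ : ℝ) (hτ : τ = b + 2 * Real.sqrt (a * c))
    (ℓ N : ℕ) (hℓ : 1 ≤ ℓ) (hN : 1 ≤ N)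
    (ψ : (Fin ℓ → Fin N) → ℝ) (hψnn : ∀ x, 0 ≤ ψ x) (hψne : ψ ≠ 0)
    (lam : ℝ) (heig : (selMut a b c ℓ N).mulVec ψ = lam • ψ) :
    lam < (N : ℝ) * (ℓ : ℝ) * τ ^ ℓ :=
  asex_eigenvalue_bound_general a b c hc hca hab τ hτ ℓ N hℓ ψ hψnn hψne lam heig
end

section
/- Let ψ₂ ≼ ψ₁ be probability distributions on ℤ (likelihood-ratio order). Then there exist disjoint (possibly empty) subsets Π₁, Π₂, Π₃ of ℤ such that supp(ψ₂) = Π₁ ∪ Π₂, supp(ψ₁) = Π₂ ∪ Π₃, and every element of Π₁ is less than every element of Π₂, which in turn is less than every element of Π₃. -/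
open scoped BigOperators

/-!
Take `Π₂ = supp ψ₂ ∩ supp ψ₁` and for `Π₁`, `Π₃` the two set differences. Any point of
`supp ψ₂` lies below any point of `supp ψ₁` as soon as one of the two is outside the common
support, because the likelihood-ratio inequality at a reversed pair would bound a positive
product by zero.
-/

open Function

/-- `hzero` says `x ∉ supp ψ₁` or `z ∉ supp ψ₂`. -/
lemma preceq.lt_of_mem_support {ψ₁ ψ₂ : ℤ → ℝ} (h : preceq ψ₂ ψ₁)
    (h₁nn : ∀ x, 0 ≤ ψ₁ x) (h₂nn : ∀ x, 0 ≤ ψ₂ x) {x z : ℤ}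
    (hx : x ∈ support ψ₂) (hz : z ∈ support ψ₁) (hzero : ψ₁ x * ψ₂ z = 0) : x < z := by
  have hpos : 0 < ψ₁ z * ψ₂ x :=
    mul_pos ((h₁nn z).lt_of_ne' hz) ((h₂nn x).lt_of_ne' hx)
  rcases lt_trichotomy x z with hlt | rfl | hgt
  · exact hlt
  · exact absurd hzero hpos.ne'
  · exact absurd (hzero ▸ h z x hgt) hpos.not_ge

theorem preceq_support_decomposition_general (ψ₁ ψ₂ : ℤ → ℝ)
    (h₁nn : ∀ x, 0 ≤ ψ₁ x) (h₂nn : ∀ x, 0 ≤ ψ₂ x)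
    (h : preceq ψ₂ ψ₁) :
    ∃ P₁ P₂ P₃ : Set ℤ,
      Disjoint P₁ P₂ ∧ Disjoint P₂ P₃ ∧ Disjoint P₁ P₃ ∧
      Function.support ψ₂ = P₁ ∪ P₂ ∧ Function.support ψ₁ = P₂ ∪ P₃ ∧
      (∀ x ∈ P₁, ∀ y ∈ P₂, x < y) ∧ (∀ y ∈ P₂, ∀ z ∈ P₃, y < z) ∧
      (∀ x ∈ P₁, ∀ z ∈ P₃, x < z) := by
  set S₁ := support ψ₁
  set S₂ := support ψ₂
  have hlt := @h.lt_of_mem_support _ _ h₁nn h₂nn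
  refine ⟨S₂ \ S₁, S₂ ∩ S₁, S₁ \ S₂, Set.disjoint_sdiff_inter,
    disjoint_sdiff_self_right.mono_left Set.inter_subset_left, disjoint_sdiff_sdiff,
    (Set.sdiff_union_inter S₂ S₁).symm, ?_, ?_, ?_, ?_⟩
  · rw [Set.inter_comm, Set.union_comm, Set.sdiff_union_inter]
  · exact fun x hx y hy ↦ hlt hx.1 hy.2 (mul_eq_zero_of_left (notMem_support.1 hx.2) _)
  · exact fun y hy z hz ↦ hlt hy.1 hz.1 (mul_eq_zero_of_right _ (notMem_support.1 hz.2))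
  · exact fun x hx z hz ↦ hlt hx.1 hz.1 (mul_eq_zero_of_left (notMem_support.1 hx.2) _)

/-- if `ψ₂ ≼ ψ₁` then the supports decompose into disjoint pieces
`P₁ < P₂ < P₃` with `supp ψ₂ = P₁ ∪ P₂` and `supp ψ₁ = P₂ ∪ P₃`. -/
theorem preceq_support_decomposition (ψ₁ ψ₂ : ℤ → ℝ)
    (h₁nn : ∀ x, 0 ≤ ψ₁ x) (h₂nn : ∀ x, 0 ≤ ψ₂ x)
    (h₁fin : (Function.support ψ₁).Finite) (h₂fin : (Function.support ψ₂).Finite)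
    (h₁sum : ∑ᶠ x : ℤ, ψ₁ x = 1) (h₂sum : ∑ᶠ x : ℤ, ψ₂ x = 1)
    (h : preceq ψ₂ ψ₁) :
    ∃ P₁ P₂ P₃ : Set ℤ,
      Disjoint P₁ P₂ ∧ Disjoint P₂ P₃ ∧ Disjoint P₁ P₃ ∧
      Function.support ψ₂ = P₁ ∪ P₂ ∧ Function.support ψ₁ = P₂ ∪ P₃ ∧
      (∀ x ∈ P₁, ∀ y ∈ P₂, x < y) ∧ (∀ y ∈ P₂, ∀ z ∈ P₃, y < z) ∧
      (∀ x ∈ P₁, ∀ z ∈ P₃, x < z) :=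
  preceq_support_decomposition_general ψ₁ ψ₂ h₁nn h₂nn h
end

section
/- Let X be an integer-valued random variable with distribution φ, mean M > 0, and finite cumulants κ₂ = V, κ₃, κ₄. Define φ*(x) = (x/M)φ(x). Then the third cumulant of φ* satisfies κ₃* − κ₃ = (V/M)·((κ₄/V) − 3(κ₃/M) + 2(V/M)²). -/
/-! Selection reweights `x` by `x / M`, so the raw moments of `φ*` are the shifted raw moments of
`φ` divided by `M`: `m*ₖ = mₖ₊₁ / M`. Expanding all central moments binomially in raw moments, the
claim becomes a rational identity in `M, m₂, m₃, m₄` with only `M` in denominators, once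
`(V / M) * (κ₄ / V)` is read as `κ₄ / M`. That reading fails only for `V = 0`, where `φ` is a point
mass, so `κ₄ = 0` and both sides vanish. -/

open scoped BigOperators

/-- Third cumulant (= third central moment). -/
noncomputable def fcm3 (φ : ℤ → ℝ) : ℝ := ∑ᶠ x : ℤ, ((x : ℝ) - fmean φ) ^ 3 * φ x

/-- Fourth central moment. -/
noncomputable def fcm4 (φ : ℤ → ℝ) : ℝ := ∑ᶠ x : ℤ, ((x : ℝ) - fmean φ) ^ 4 * φ x

/-- Fourth cumulant: `κ₄ = μ₄ − 3V²`. -/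
noncomputable def fcum4 (φ : ℤ → ℝ) : ℝ := fcm4 φ - 3 * (fvar φ) ^ 2

open Finset

noncomputable def rawMoment (φ : ℤ → ℝ) (k : ℕ) : ℝ := ∑ᶠ x : ℤ, (x : ℝ) ^ k * φ x

lemma finsum_mul_eq_sum_toFinset {φ : ℤ → ℝ} (hfin : (Function.support φ).Finite) (g : ℤ → ℝ) :
    ∑ᶠ x : ℤ, g x * φ x = ∑ x ∈ hfin.toFinset, g x * φ x :=
  finsum_eq_sum_of_support_subset _ <| by
    rw [hfin.coe_toFinset]; exact Function.support_mul_subset_right g φ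

lemma rawMoment_zero {φ : ℤ → ℝ} (hsum : ∑ᶠ x : ℤ, φ x = 1) : rawMoment φ 0 = 1 := by
  simpa [rawMoment] using hsum

lemma rawMoment_one (φ : ℤ → ℝ) : rawMoment φ 1 = fmean φ := by
  simp [rawMoment, fmean]

lemma finsum_sub_pow_mul_eq_sum_rawMoment {φ : ℤ → ℝ} (hfin : (Function.support φ).Finite)
    (m : ℝ) (n : ℕ) :
    ∑ᶠ x : ℤ, ((x : ℝ) - m) ^ n * φ x
      = ∑ k ∈ range (n + 1), (-m) ^ (n - k) * (n.choose k : ℝ) * rawMoment φ k := by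
  simp only [rawMoment, finsum_mul_eq_sum_toFinset hfin, mul_sum]
  rw [sum_comm]
  refine sum_congr rfl fun x _ => ?_
  rw [sub_eq_add_neg, add_pow, sum_mul]
  exact sum_congr rfl fun k _ => by ring

lemma rawMoment_selection {φ : ℤ → ℝ} (hfin : (Function.support φ).Finite) (c : ℝ) (k : ℕ) :
    rawMoment (fun x : ℤ => (x : ℝ) / c * φ x) k = rawMoment φ (k + 1) / c := by
  have hterm : ∀ x : ℤ, (x : ℝ) ^ k * ((x : ℝ) / c * φ x) = ((x : ℝ) ^ (k + 1) / c) * φ x :=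
    fun x => by ring
  simp only [rawMoment, hterm, finsum_mul_eq_sum_toFinset hfin, sum_div]
  exact sum_congr rfl fun x _ => by ring

lemma fcm3_selection_sub {φ : ℤ → ℝ} (hfin : (Function.support φ).Finite)
    (hsum : ∑ᶠ x : ℤ, φ x = 1) (hM : fmean φ ≠ 0) :
    fcm3 (fun x : ℤ => (x : ℝ) / fmean φ * φ x) - fcm3 φ
      = fcum4 φ / fmean φ - 3 * fvar φ * fcm3 φ / fmean φ ^ 2
        + 2 * fvar φ ^ 3 / fmean φ ^ 3 := by
  have hfinSel : (Function.support fun x : ℤ => (x : ℝ) / fmean φ * φ x).Finite :=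
    hfin.subset (Function.support_mul_subset_right _ φ)
  have hmeanSel : fmean (fun x : ℤ => (x : ℝ) / fmean φ * φ x) = rawMoment φ 2 / fmean φ := by
    rw [← rawMoment_one, rawMoment_selection hfin]
  simp only [fcum4, fcm4, fcm3, fvar, hmeanSel, finsum_sub_pow_mul_eq_sum_rawMoment hfin,
    finsum_sub_pow_mul_eq_sum_rawMoment hfinSel, rawMoment_selection hfin, sum_range_succ,
    sum_range_zero, rawMoment_zero hsum]
  norm_num [Nat.choose, rawMoment_one]
  field_simp
  ring

lemma fcm4_eq_zero_of_fvar_eq_zero {φ : ℤ → ℝ} (hnn : ∀ x, 0 ≤ φ x)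
    (hfin : (Function.support φ).Finite) (hV : fvar φ = 0) : fcm4 φ = 0 := by
  rw [fvar, finsum_mul_eq_sum_toFinset hfin,
    sum_eq_zero_iff_of_nonneg fun x _ => mul_nonneg (sq_nonneg _) (hnn x)] at hV
  rw [fcm4, finsum_mul_eq_sum_toFinset hfin]
  refine sum_eq_zero fun x hx => ?_
  calc ((x : ℝ) - fmean φ) ^ 4 * φ x
      = ((x : ℝ) - fmean φ) ^ 2 * (((x : ℝ) - fmean φ) ^ 2 * φ x) := by ring
    _ = 0 := by rw [hV x hx, mul_zero]

/-- the effect of selection `φ*(x) = (x/M)φ(x)` on the third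
cumulant: `κ₃* − κ₃ = (V/M)((κ₄/V) − 3(κ₃/M) + 2(V/M)²)`. -/
theorem selection_third_cumulant (φ : ℤ → ℝ) (hnn : ∀ x, 0 ≤ φ x)
    (hfin : (Function.support φ).Finite) (hsum : ∑ᶠ x : ℤ, φ x = 1)
    (M V κ₃ κ₄ : ℝ) (hM : M = fmean φ) (hMpos : 0 < M) (hV : V = fvar φ)
    (hκ₃ : κ₃ = fcm3 φ) (hκ₄ : κ₄ = fcum4 φ) :
    fcm3 (fun x => ((x : ℝ) / M) * φ x) - κ₃
      = (V / M) * ((κ₄ / V) - 3 * (κ₃ / M) + 2 * (V / M) ^ 2) := by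
  subst hM hV hκ₃ hκ₄
  rw [fcm3_selection_sub hfin hsum hMpos.ne']
  rcases eq_or_ne (fvar φ) 0 with hV0 | hV0
  · simp [fcum4, fcm4_eq_zero_of_fvar_eq_zero hnn hfin hV0, hV0]
  · field_simp
end
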